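/- (Key algebraic computation in the proof of Theorem 2.15) Let W be a 3-dimensional linear subspace of ℝ⁷, let π denote the orthogonal projection of ℝ⁷ onto W^⊥, and let π^T = id − π. Fix V ∈ W and define the trilinear map T : (ℝ⁷)³ → ℝ by T(X,Y,Z) = ⟨V,Z⟩⟨V×Y, πX⟩ − ⟨V,Y⟩⟨V×Z, πX⟩ + ⟨V,X⟩⟨V×Z, πY⟩ − ⟨V,Z⟩⟨V×X, πY⟩ + ⟨V,Y⟩⟨V×X, πZ⟩ − ⟨V,X⟩⟨V×Y, πZ⟩. Then for every orthonormal basis {g₁,g₂,g₃} of W: (1/6) Σ_{m,n=1}^7 T( 2π^T(e_m×e_n) − π(e_m×e_n), e_m, e_n ) = − Σ_{a=1}^3 ‖π(V×g_a)‖². -/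

import Mathlib

open scoped RealInnerProductSpace

noncomputable section

abbrev E7 : Type := EuclideanSpace ℝ (Fin 7)

/-- The standard orthonormal basis vectors of ℝ⁷. -/
def e7 (i : Fin 7) : E7 := EuclideanSpace.single i 1

/-- Kronecker delta. -/
def kd7 (i j : Fin 7) : ℝ := if i = j then 1 else 0

/-- `e^{abc}(e_i, e_j, e_k)` : component of a wedge of three dual basis covectors. -/
def trip7 (a b c i j k : Fin 7) : ℝ :=
  Matrix.det !![kd7 a i, kd7 a j, kd7 a k;
                kd7 b i, kd7 b j, kd7 b k;
                kd7 c i, kd7 c j, kd7 c k]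

/-- `e^{abcd}(e_i, e_j, e_k, e_l)` : component of a wedge of four dual basis covectors. -/
def quad7 (a b c d i j k l : Fin 7) : ℝ :=
  Matrix.det !![kd7 a i, kd7 a j, kd7 a k, kd7 a l;
                kd7 b i, kd7 b j, kd7 b k, kd7 b l;
                kd7 c i, kd7 c j, kd7 c k, kd7 c l;
                kd7 d i, kd7 d j, kd7 d k, kd7 d l]

/-- Components `φ_{ijk}` of the standard G₂ 3-form
`φ = e¹²³ + e¹⁴⁵ − e¹⁶⁷ + e²⁴⁶ − e²⁷⁵ + e³⁴⁷ − e³⁵⁶` (indices shifted to be 0-based). -/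
def phiC (i j k : Fin 7) : ℝ :=
  trip7 0 1 2 i j k + trip7 0 3 4 i j k - trip7 0 5 6 i j k
  + trip7 1 3 5 i j k - trip7 1 6 4 i j k + trip7 2 3 6 i j k - trip7 2 4 5 i j k

/-- Components `ψ_{ijkl}` of the Hodge dual 4-form
`ψ = e⁴⁵⁶⁷ − e²³⁴⁵ + e²³⁶⁷ − e³¹⁴⁶ + e³¹⁷⁵ − e¹²⁴⁷ + e¹²⁵⁶` (0-based). -/
def psiC (i j k l : Fin 7) : ℝ :=
  quad7 3 4 5 6 i j k l - quad7 1 2 3 4 i j k l + quad7 1 2 5 6 i j k l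
  - quad7 2 0 3 5 i j k l + quad7 2 0 6 4 i j k l
  - quad7 0 1 3 6 i j k l + quad7 0 1 4 5 i j k l

/-- The standard G₂ 3-form evaluated on arbitrary vectors. -/
def phi7 (x y z : E7) : ℝ := ∑ i, ∑ j, ∑ k, x i * y j * z k * phiC i j k

/-- The 4-form ψ evaluated on arbitrary vectors. -/
def psi7 (x y z w : E7) : ℝ :=
  ∑ i, ∑ j, ∑ k, ∑ l, x i * y j * z k * w l * psiC i j k l

/-- The cross product on ℝ⁷, characterized by `⟨x × y, z⟩ = φ(x,y,z)`. -/
def cross7 (x y : E7) : E7 := (WithLp.equiv 2 (Fin 7 → ℝ)).symm fun k => phi7 x y (e7 k)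

/-- The vector-valued 3-form χ, characterized by `⟨χ(x,y,z), w⟩ = ψ(x,y,z,w)`. -/
def chi7 (x y z : E7) : E7 := (WithLp.equiv 2 (Fin 7 → ℝ)).symm fun l => psi7 x y z (e7 l)

/-- Orthogonal projection `π` of ℝ⁷ onto `Wᗮ`. -/
def projPerp (W : Submodule ℝ E7) (x : E7) : E7 := (Submodule.orthogonalProjectionOnto Wᗮ x : E7)

/-- Tangential projection `π^T = id − π`. -/
def projTan (W : Submodule ℝ E7) (x : E7) : E7 := x - projPerp W x

/-- The trilinear map `T` built from `V` and the projection `pr = π`: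
`T(X,Y,Z) = ⟨V,Z⟩⟨V×Y, πX⟩ − ⟨V,Y⟩⟨V×Z, πX⟩ + ⟨V,X⟩⟨V×Z, πY⟩ − ⟨V,Z⟩⟨V×X, πY⟩
  + ⟨V,Y⟩⟨V×X, πZ⟩ − ⟨V,X⟩⟨V×Y, πZ⟩`. -/
def Tform (V : E7) (pr : E7 → E7) (X Y Z : E7) : ℝ :=
  ⟪V, Z⟫ * ⟪cross7 V Y, pr X⟫ - ⟪V, Y⟫ * ⟪cross7 V Z, pr X⟫
  + ⟪V, X⟫ * ⟪cross7 V Z, pr Y⟫ - ⟪V, Z⟫ * ⟪cross7 V X, pr Y⟫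
  + ⟪V, Y⟫ * ⟪cross7 V X, pr Z⟫ - ⟪V, X⟫ * ⟪cross7 V Y, pr Z⟫

/-!
Write `C = V × ·` and `π` for the projection onto `Wᗮ`. In coordinates one checks that the cross
product is skew, `⟨x × y, z⟩ = ⟨x, y × z⟩` and `C² = ⟨V, ·⟩ V − |V|²`. The form `T(X, Y, Z)` is
the antisymmetrization in `(Y, Z)` of a cyclic sum, and `X = 2πᵀ(eₘ × eₙ) − π(eₘ × eₙ)` is odd in
`(m, n)`, so the double sum is twice the double sum of the cyclic form. Contracting the basis
vectors against `V` turns the latter into `tr(CᵀπC) + 4 tr(πC²) + 3 tr(πCᵀπC)`. Using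
`C² = ⟨V, ·⟩ V − |V|²` and `πV = 0`, the first two are `|V|² tr π` and `−|V|² tr π`, and writing
`π = id − Σₐ gₐ gₐᵀ` the third is `|V|² tr π − Σₐ ‖π(V × gₐ)‖²`. The traces of `π`
cancel (`1 − 4 + 3 = 0`), leaving `−3 Σₐ ‖π(V × gₐ)‖²` for the cyclic form and
`−6 Σₐ ‖π(V × gₐ)‖²` for `T`.
-/

section OrthonormalBasis

variable {ι E F : Type*} [Fintype ι] [NormedAddCommGroup E] [InnerProductSpace ℝ E]
  [NormedAddCommGroup F] [InnerProductSpace ℝ F]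

theorem OrthonormalBasis.sum_inner_mul_inner_apply (b : OrthonormalBasis ι ℝ E) (L : E →ₗ[ℝ] F)
    (x : E) (y : F) : ∑ i, ⟪x, b i⟫ * ⟪y, L (b i)⟫ = ⟪y, L x⟫ := by
  conv_rhs => rw [← b.sum_repr' x]
  simp [inner_sum, inner_smul_right, real_inner_comm]

-- Cyclicity of the trace, `tr (A† B) = tr (B A†)`, in an orthonormal basis.
theorem OrthonormalBasis.sum_inner_apply_comm (b : OrthonormalBasis ι ℝ E) {A A' B B' : E → E}
    (hA : ∀ x y, ⟪A x, y⟫ = ⟪x, A' y⟫) (hB : ∀ x y, ⟪B x, y⟫ = ⟪x, B' y⟫) :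
    ∑ i, ⟪A (b i), B (b i)⟫ = ∑ i, ⟪B' (b i), A' (b i)⟫ :=
  calc ∑ i, ⟪A (b i), B (b i)⟫ = ∑ i, ∑ j, ⟪A (b i), b j⟫ * ⟪b j, B (b i)⟫ := by
        simp only [b.sum_inner_mul_inner]
    _ = ∑ j, ∑ i, ⟪B' (b j), b i⟫ * ⟪b i, A' (b j)⟫ := by
        rw [Finset.sum_comm]
        refine Finset.sum_congr rfl fun j _ => Finset.sum_congr rfl fun i _ => ?_
        rw [hA, real_inner_comm (B _), hB, real_inner_comm (b i), mul_comm]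
    _ = ∑ j, ⟪B' (b j), A' (b j)⟫ := by simp only [b.sum_inner_mul_inner]

end OrthonormalBasis

theorem cross7_apply (x y : E7) (k : Fin 7) :
    cross7 x y k = ∑ i, ∑ j, x i * y j * phiC i j k := by
  simp [cross7, phi7, e7, PiLp.single_apply]

set_option maxHeartbeats 1000000 in
theorem cross7_eq (x y : E7) : cross7 x y = !₂[
    x 1 * y 2 - x 2 * y 1 + x 3 * y 4 - x 4 * y 3 - x 5 * y 6 + x 6 * y 5,
    x 2 * y 0 - x 0 * y 2 + x 3 * y 5 - x 5 * y 3 + x 4 * y 6 - x 6 * y 4,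
    x 0 * y 1 - x 1 * y 0 + x 3 * y 6 - x 6 * y 3 - x 4 * y 5 + x 5 * y 4,
    x 4 * y 0 - x 0 * y 4 + x 5 * y 1 - x 1 * y 5 + x 6 * y 2 - x 2 * y 6,
    x 0 * y 3 - x 3 * y 0 + x 6 * y 1 - x 1 * y 6 + x 2 * y 5 - x 5 * y 2,
    x 0 * y 6 - x 6 * y 0 + x 1 * y 3 - x 3 * y 1 + x 4 * y 2 - x 2 * y 4,
    x 5 * y 0 - x 0 * y 5 + x 1 * y 4 - x 4 * y 1 + x 2 * y 3 - x 3 * y 2] := by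
  ext k
  rw [cross7_apply]
  fin_cases k <;> simp [Fin.sum_univ_seven, phiC, trip7, kd7, Matrix.det_fin_three] <;> ring

theorem cross7_anticomm (x y : E7) : cross7 y x = -cross7 x y := by
  ext k; fin_cases k <;> simp [cross7_eq] <;> ring

theorem cross7_add_right (x y z : E7) : cross7 x (y + z) = cross7 x y + cross7 x z := by
  ext k; fin_cases k <;> simp [cross7_eq] <;> ring

theorem cross7_smul_right (c : ℝ) (x y : E7) : cross7 x (c • y) = c • cross7 x y := by
  ext k; fin_cases k <;> simp [cross7_eq] <;> ring

theorem inner_cross7_left (x y z : E7) : ⟪cross7 x y, z⟫ = ⟪x, cross7 y z⟫ := by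
  simp [cross7_eq, PiLp.inner_apply, Fin.sum_univ_seven]; ring

theorem cross7_cross7_self (x w : E7) : cross7 x (cross7 x w) = ⟪x, w⟫ • x - ⟪x, x⟫ • w := by
  rw [PiLp.inner_apply, PiLp.inner_apply]
  ext k
  fin_cases k <;> simp [cross7_eq, Fin.sum_univ_seven] <;> ring

def cross7ₗ : E7 →ₗ[ℝ] E7 →ₗ[ℝ] E7 :=
  LinearMap.mk₂ ℝ cross7
    (fun x y z => by simp only [cross7_anticomm z, cross7_add_right, neg_add])
    (fun c x y => by simp only [cross7_anticomm y, cross7_smul_right, smul_neg])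
    cross7_add_right (fun c x y => cross7_smul_right c x y)

@[simp] theorem cross7ₗ_apply (x y : E7) : cross7ₗ x y = cross7 x y := rfl

theorem cross7_neg_right (x y : E7) : cross7 x (-y) = -cross7 x y :=
  map_neg (cross7ₗ x) y

theorem cross7_sub_right (x y z : E7) : cross7 x (y - z) = cross7 x y - cross7 x z :=
  map_sub (cross7ₗ x) y z

theorem cross7_sum_right {κ : Type*} (s : Finset κ) (x : E7) (f : κ → E7) :
    cross7 x (∑ a ∈ s, f a) = ∑ a ∈ s, cross7 x (f a) :=
  map_sum (cross7ₗ x) f s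

theorem inner_cross7_eq_neg (x y z : E7) : ⟪cross7 x y, z⟫ = -⟪y, cross7 x z⟫ := by
  rw [cross7_anticomm, inner_neg_left, inner_cross7_left]

theorem Submodule.starProjection_starProjection_apply {𝕜 E : Type*} [RCLike 𝕜]
    [NormedAddCommGroup E] [InnerProductSpace 𝕜 E] (K : Submodule 𝕜 E) [K.HasOrthogonalProjection]
    (x : E) : K.starProjection (K.starProjection x) = K.starProjection x :=
  K.starProjection_eq_self_iff.mpr (K.starProjection_apply_mem x)

theorem Submodule.real_inner_starProjection_eq_norm_sq {E : Type*} [NormedAddCommGroup E]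
    [InnerProductSpace ℝ E] (K : Submodule ℝ E) [K.HasOrthogonalProjection] (x : E) :
    ⟪x, K.starProjection x⟫ = ‖K.starProjection x‖ ^ 2 := by
  rw [← K.starProjection_starProjection_apply x, ← K.inner_starProjection_left_eq_right,
    K.starProjection_starProjection_apply, real_inner_self_eq_norm_sq]

theorem Submodule.inner_starProjection_orthogonal_of_mem {𝕜 E : Type*} [RCLike 𝕜]
    [NormedAddCommGroup E] [InnerProductSpace 𝕜 E] {K : Submodule 𝕜 E}
    [Kᗮ.HasOrthogonalProjection] {v : E} (hv : v ∈ K) (x : E) :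
    inner 𝕜 v (Kᗮ.starProjection x) = 0 :=
  K.inner_right_of_mem_orthogonal hv (Kᗮ.starProjection_apply_mem x)

theorem Submodule.starProjection_span_apply_eq_sum {ι E : Type*} [Fintype ι] [NormedAddCommGroup E]
    [InnerProductSpace ℝ E] [FiniteDimensional ℝ E] {g : ι → E} (hg : Orthonormal ℝ g) (x : E) :
    (Submodule.span ℝ (Set.range g)).starProjection x = ∑ a, ⟪g a, x⟫ • g a := by
  have hb : Orthonormal ℝ (Module.Basis.span hg.linearIndependent) := by
    convert orthonormal_span hg using 2 with a
    exact Module.Basis.span_apply hg.linearIndependent a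
  simp [((Module.Basis.span _).toOrthonormalBasis hb).starProjection_eq_sum_rankOne,
    Module.Basis.span_apply]

section Traces

variable {ι : Type*} [Fintype ι] {W : Submodule ℝ E7} {V : E7}

theorem sum_inner_cross7_starProjection_cross7 (hV : V ∈ W) (b : OrthonormalBasis ι ℝ E7) :
    ∑ i, ⟪cross7 V (b i), Wᗮ.starProjection (cross7 V (b i))⟫
      = ⟪V, V⟫ * ∑ i, ⟪b i, Wᗮ.starProjection (b i)⟫ := by
  rw [b.sum_inner_apply_comm (A := cross7 V) (A' := fun y => -cross7 V y)
      (B := fun y => Wᗮ.starProjection (cross7 V y))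
      (B' := fun y => -cross7 V (Wᗮ.starProjection y))
      (fun x y => by rw [inner_cross7_eq_neg, inner_neg_right])
      (fun x y => by
        rw [Wᗮ.inner_starProjection_left_eq_right, inner_cross7_eq_neg, inner_neg_right]),
    Finset.mul_sum]
  refine Finset.sum_congr rfl fun i _ => ?_
  rw [inner_neg_neg, inner_cross7_eq_neg, cross7_cross7_self, inner_sub_right, inner_smul_right,
    inner_smul_right, real_inner_comm V, Submodule.inner_starProjection_orthogonal_of_mem hV,
    real_inner_comm (b i) (Wᗮ.starProjection (b i))]
  ring

theorem sum_inner_cross7_cross7_starProjection (hV : V ∈ W) (b : OrthonormalBasis ι ℝ E7) :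
    ∑ i, ⟪cross7 V (cross7 V (b i)), Wᗮ.starProjection (b i)⟫
      = -(⟪V, V⟫ * ∑ i, ⟪b i, Wᗮ.starProjection (b i)⟫) := by
  simp only [cross7_cross7_self, inner_sub_left, real_inner_smul_left,
    Submodule.inner_starProjection_orthogonal_of_mem hV, mul_zero, zero_sub, Finset.sum_neg_distrib,
    Finset.mul_sum]

theorem sum_inner_cross7_starProjection_cross7_starProjection (hV : V ∈ W)
    (b : OrthonormalBasis ι ℝ E7) {κ : Type*} [Fintype κ] {g : κ → E7} (hg : Orthonormal ℝ g)
    (hspan : Submodule.span ℝ (Set.range g) = W) :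
    ∑ i, ⟪cross7 V (Wᗮ.starProjection (cross7 V (b i))), Wᗮ.starProjection (b i)⟫
      = ∑ a, ‖Wᗮ.starProjection (cross7 V (g a))‖ ^ 2
        - ⟪V, V⟫ * ∑ i, ⟪b i, Wᗮ.starProjection (b i)⟫ := by
  have hP : ∀ x, Wᗮ.starProjection x = x - ∑ a, ⟪g a, x⟫ • g a := fun x => by
    rw [Submodule.starProjection_orthogonal', sub_apply, one_apply_eq_self, ← hspan,
      Submodule.starProjection_span_apply_eq_sum hg]
  calc ∑ i, ⟪cross7 V (Wᗮ.starProjection (cross7 V (b i))), Wᗮ.starProjection (b i)⟫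
      = ∑ a, ∑ i, ⟪g a, b i⟫ * ⟪cross7 V (g a), Wᗮ.starProjection (cross7 V (b i))⟫
        - ∑ i, ⟪cross7 V (b i), Wᗮ.starProjection (cross7 V (b i))⟫ := by
        rw [Finset.sum_comm, ← Finset.sum_sub_distrib]
        refine Finset.sum_congr rfl fun i _ => ?_
        rw [inner_cross7_eq_neg, hP (b i), cross7_sub_right, cross7_sum_right, inner_sub_right,
          inner_sum]
        simp only [cross7_smul_right, real_inner_smul_right, real_inner_comm (cross7 V _)]
        ring
    _ = ∑ a, ‖Wᗮ.starProjection (cross7 V (g a))‖ ^ 2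
        - ⟪V, V⟫ * ∑ i, ⟪b i, Wᗮ.starProjection (b i)⟫ := by
        rw [sum_inner_cross7_starProjection_cross7 hV]
        congr 1
        refine Finset.sum_congr rfl fun a _ => ?_
        refine (b.sum_inner_mul_inner_apply (Wᗮ.starProjection.toLinearMap ∘ₗ cross7ₗ V) _ _).trans
          ?_
        rw [LinearMap.comp_apply, ContinuousLinearMap.coe_coe, cross7ₗ_apply,
          Wᗮ.real_inner_starProjection_eq_norm_sq]

end Traces

section Contractions

variable {ι : Type*} [Fintype ι] (V : E7) (b : OrthonormalBasis ι ℝ E7)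

theorem sum_sum_inner_mul_inner_cross7_right (L : E7 →L[ℝ] E7) :
    ∑ i, ∑ j, ⟪V, b j⟫ * ⟪cross7 V (b i), L (cross7 (b i) (b j))⟫
      = -∑ i, ⟪cross7 V (b i), L (cross7 V (b i))⟫ := by
  rw [← Finset.sum_neg_distrib]
  refine Finset.sum_congr rfl fun i _ => ?_
  refine (b.sum_inner_mul_inner_apply (L.toLinearMap ∘ₗ cross7ₗ (b i)) _ _).trans ?_
  rw [LinearMap.comp_apply, ContinuousLinearMap.coe_coe, cross7ₗ_apply, cross7_anticomm V, map_neg,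
    inner_neg_right]

theorem sum_sum_inner_cross7_mul_inner (f : E7 → E7) :
    ∑ i, ∑ j, ⟪V, cross7 (b i) (b j)⟫ * ⟪cross7 V (b j), f (b i)⟫
      = ∑ i, ⟪cross7 V (cross7 V (b i)), f (b i)⟫ := by
  refine Finset.sum_congr rfl fun i _ => ?_
  simp only [← inner_cross7_left V (b i), real_inner_comm (f (b i))]
  exact b.sum_inner_mul_inner_apply (cross7ₗ V) _ _

theorem sum_sum_inner_mul_inner_cross7_left (M : E7 →ₗ[ℝ] E7) (f : E7 → E7) :
    ∑ i, ∑ j, ⟪V, b i⟫ * ⟪M (cross7 (b i) (b j)), f (b j)⟫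
      = ∑ j, ⟪M (cross7 V (b j)), f (b j)⟫ := by
  rw [Finset.sum_comm]
  refine Finset.sum_congr rfl fun j _ => ?_
  simp only [real_inner_comm (f (b j))]
  exact b.sum_inner_mul_inner_apply (M ∘ₗ cross7ₗ.flip (b j)) _ _

end Contractions

def Tcyclic (V : E7) (pr : E7 → E7) (X Y Z : E7) : ℝ :=
  ⟪V, Z⟫ * ⟪cross7 V Y, pr X⟫ + ⟪V, X⟫ * ⟪cross7 V Z, pr Y⟫ + ⟪V, Y⟫ * ⟪cross7 V X, pr Z⟫

theorem Tform_eq_Tcyclic_sub_Tcyclic (V : E7) (pr : E7 → E7) (X Y Z : E7) :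
    Tform V pr X Y Z = Tcyclic V pr X Y Z - Tcyclic V pr X Z Y := by
  unfold Tform Tcyclic
  ring

theorem Tcyclic_neg (V : E7) (L : E7 →L[ℝ] E7) (X Y Z : E7) :
    Tcyclic V L (-X) Y Z = -Tcyclic V L X Y Z := by
  simp only [Tcyclic, map_neg, cross7_neg_right, inner_neg_left, inner_neg_right]
  ring

theorem sum_sum_Tform_eq_two_mul {ι : Type*} [Fintype ι] (V : E7) (L : E7 →L[ℝ] E7)
    (X : ι → ι → E7) (hX : ∀ i j, X j i = -X i j) (b : ι → E7) :
    ∑ i, ∑ j, Tform V L (X i j) (b i) (b j) = 2 * ∑ i, ∑ j, Tcyclic V L (X i j) (b i) (b j) := by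
  have hswap : ∀ i j, Tcyclic V L (X i j) (b j) (b i) = -Tcyclic V L (X j i) (b j) (b i) := by
    intro i j
    rw [hX, Tcyclic_neg]
  simp only [Tform_eq_Tcyclic_sub_Tcyclic, hswap, sub_neg_eq_add, Finset.sum_add_distrib]
  rw [Finset.sum_comm (f := fun i j => Tcyclic V L (X j i) (b j) (b i))]
  ring

section Evaluation

variable {ι : Type*} [Fintype ι] {W : Submodule ℝ E7} {V : E7}

theorem Tcyclic_two_smul_sub (hV : V ∈ W) (u Y Z : E7) :
    Tcyclic V Wᗮ.starProjection
        ((2 : ℝ) • (u - Wᗮ.starProjection u) - Wᗮ.starProjection u) Y Z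
      = -(⟪V, Z⟫ * ⟪cross7 V Y, Wᗮ.starProjection u⟫)
        + 2 * (⟪V, u⟫ * ⟪cross7 V Z, Wᗮ.starProjection Y⟫)
        + 2 * (⟪V, Y⟫ * ⟪cross7 V u, Wᗮ.starProjection Z⟫)
        - 3 * (⟪V, Y⟫ * ⟪cross7 V (Wᗮ.starProjection u), Wᗮ.starProjection Z⟫) := by
  simp only [Tcyclic, map_sub, map_smul, Submodule.starProjection_starProjection_apply,
    cross7_sub_right, cross7_smul_right, inner_sub_left, inner_sub_right, real_inner_smul_left,
    real_inner_smul_right, Submodule.inner_starProjection_orthogonal_of_mem hV]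
  ring

theorem sum_sum_Tcyclic (hV : V ∈ W) (b : OrthonormalBasis ι ℝ E7) {κ : Type*} [Fintype κ]
    {g : κ → E7} (hg : Orthonormal ℝ g) (hspan : Submodule.span ℝ (Set.range g) = W) :
    ∑ i, ∑ j, Tcyclic V Wᗮ.starProjection
        ((2 : ℝ) • (cross7 (b i) (b j) - Wᗮ.starProjection (cross7 (b i) (b j)))
          - Wᗮ.starProjection (cross7 (b i) (b j))) (b i) (b j)
      = -3 * ∑ a, ‖Wᗮ.starProjection (cross7 V (g a))‖ ^ 2 := by
  have h₁ := sum_sum_inner_mul_inner_cross7_right V b Wᗮ.starProjection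
  have h₂ := sum_sum_inner_cross7_mul_inner V b Wᗮ.starProjection
  have h₃ : ∑ i, ∑ j, ⟪V, b i⟫ * ⟪cross7 V (cross7 (b i) (b j)), Wᗮ.starProjection (b j)⟫
      = ∑ j, ⟪cross7 V (cross7 V (b j)), Wᗮ.starProjection (b j)⟫ :=
    sum_sum_inner_mul_inner_cross7_left V b (cross7ₗ V) _
  have h₄ : ∑ i, ∑ j, ⟪V, b i⟫ * ⟪cross7 V (Wᗮ.starProjection (cross7 (b i) (b j))),
        Wᗮ.starProjection (b j)⟫
      = ∑ j, ⟪cross7 V (Wᗮ.starProjection (cross7 V (b j))), Wᗮ.starProjection (b j)⟫ :=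
    sum_sum_inner_mul_inner_cross7_left V b (cross7ₗ V ∘ₗ Wᗮ.starProjection.toLinearMap) _
  simp only [Tcyclic_two_smul_sub hV, Finset.sum_add_distrib, Finset.sum_sub_distrib,
    Finset.sum_neg_distrib, ← Finset.mul_sum _ _ (2 : ℝ), ← Finset.mul_sum _ _ (3 : ℝ)]
  rw [h₁, h₂, h₃, h₄, sum_inner_cross7_starProjection_cross7 hV,
    sum_inner_cross7_cross7_starProjection hV,
    sum_inner_cross7_starProjection_cross7_starProjection hV b hg hspan]
  ring

end Evaluation

theorem e7_eq_basisFun : e7 = EuclideanSpace.basisFun (Fin 7) ℝ := by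
  funext i
  simp [e7]

theorem key_computation_assoc_general (W : Submodule ℝ E7)
    (V : E7) (hV : V ∈ W)
    (g : Fin 3 → E7) (hg : Orthonormal ℝ g)
    (hspan : Submodule.span ℝ (Set.range g) = W) :
    (1/6 : ℝ) * ∑ m : Fin 7, ∑ n : Fin 7,
        Tform V (projPerp W)
          ((2 : ℝ) • projTan W (cross7 (e7 m) (e7 n)) - projPerp W (cross7 (e7 m) (e7 n)))
          (e7 m) (e7 n)
      = - ∑ a : Fin 3, ‖projPerp W (cross7 V (g a))‖ ^ 2 := by
  have hprojPerp : projPerp W = Wᗮ.starProjection := rfl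
  simp only [projTan, hprojPerp, e7_eq_basisFun]
  rw [sum_sum_Tform_eq_two_mul, sum_sum_Tcyclic hV _ hg hspan]
  · ring
  · intro i j
    rw [cross7_anticomm, map_neg]
    module

/-- Key algebraic computation in the proof of Theorem 2.15. -/
theorem key_computation_assoc (W : Submodule ℝ E7) (hW : Module.finrank ℝ W = 3)
    (V : E7) (hV : V ∈ W)
    (g : Fin 3 → E7) (hg : Orthonormal ℝ g) (hgW : ∀ a, g a ∈ W)
    (hspan : Submodule.span ℝ (Set.range g) = W) :
    (1/6 : ℝ) * ∑ m : Fin 7, ∑ n : Fin 7,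
        Tform V (projPerp W)
          ((2 : ℝ) • projTan W (cross7 (e7 m) (e7 n)) - projPerp W (cross7 (e7 m) (e7 n)))
          (e7 m) (e7 n)
      = - ∑ a : Fin 3, ‖projPerp W (cross7 V (g a))‖ ^ 2 :=
  key_computation_assoc_general W V hV g hg hspan
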